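/- arXiv:1906.06740 — 2 statements merged into one kernel-verified Lean document; each statement's English description precedes it below -/
import Mathlib

section
/- For every t ≥ √(log(L/α² + 1)) with L, α > 0, one has 1/√(e^{t²} - 1) ≤ e^{-t²/2} √(1 + α²/L); consequently ∫_{√(log(L/α²+1))}^{∞} (e^{t²}-1)^{-1/2} dt ≤ √(1 + α²/L) ∫_{√(log(L/α²+1))}^{∞} e^{-t²/2} dt = √(2π(1 + α²/L)) (1 - Φ(√(log(L/α²+1)))), where Φ is the standard normal cdf. -/
open MeasureTheory Real

/-- The standard normal cumulative distribution function. -/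
noncomputable def stdNormalCDF (x : ℝ) : ℝ :=
  ∫ u in Set.Iic x, Real.exp (-u ^ 2 / 2) / Real.sqrt (2 * Real.pi)

/-- For `t ≥ √(log(L/α² + 1))` one has
`1/√(e^{t²} - 1) ≤ e^{-t²/2} √(1 + α²/L)`; consequently
`∫_{√(log(L/α²+1))}^∞ (e^{t²}-1)^{-1/2} dt
  ≤ √(1 + α²/L) ∫_{√(log(L/α²+1))}^∞ e^{-t²/2} dt
  = √(2π(1 + α²/L)) (1 - Φ(√(log(L/α²+1))))`. -/
theorem stmt_17 (L α : ℝ) (hL : 0 < L) (hα : 0 < α) :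
    (∀ t : ℝ, Real.sqrt (Real.log (L / α ^ 2 + 1)) ≤ t →
      1 / Real.sqrt (Real.exp (t ^ 2) - 1) ≤
        Real.exp (-t ^ 2 / 2) * Real.sqrt (1 + α ^ 2 / L)) ∧
    (∫ t in Set.Ioi (Real.sqrt (Real.log (L / α ^ 2 + 1))),
        1 / Real.sqrt (Real.exp (t ^ 2) - 1)) ≤
      Real.sqrt (1 + α ^ 2 / L) *
        ∫ t in Set.Ioi (Real.sqrt (Real.log (L / α ^ 2 + 1))),
          Real.exp (-t ^ 2 / 2) ∧
    Real.sqrt (1 + α ^ 2 / L) *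
        (∫ t in Set.Ioi (Real.sqrt (Real.log (L / α ^ 2 + 1))),
          Real.exp (-t ^ 2 / 2)) =
      Real.sqrt (2 * Real.pi * (1 + α ^ 2 / L)) *
        (1 - stdNormalCDF (Real.sqrt (Real.log (L / α ^ 2 + 1)))) := by
  have hα2 : 0 < α ^ 2 := by positivity
  have hLα : 0 < L / α ^ 2 := div_pos hL hα2
  have hlog : 0 ≤ Real.log (L / α ^ 2 + 1) := Real.log_nonneg (by linarith)
  set s := Real.sqrt (Real.log (L / α ^ 2 + 1)) with hs
  set c := 1 + α ^ 2 / L with hc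
  have hcpos : 0 < c := by positivity
  have key : ∀ t : ℝ, s ≤ t →
      1 / Real.sqrt (Real.exp (t ^ 2) - 1) ≤
        Real.exp (-t ^ 2 / 2) * Real.sqrt c := by
    intro t ht
    have ht2 : Real.log (L / α ^ 2 + 1) ≤ t ^ 2 := by
      nlinarith [Real.sq_sqrt hlog, Real.sqrt_nonneg (Real.log (L / α ^ 2 + 1))]
    have hexp : L / α ^ 2 + 1 ≤ Real.exp (t ^ 2) := by
      calc L / α ^ 2 + 1 = Real.exp (Real.log (L / α ^ 2 + 1)) :=
            (Real.exp_log (by linarith)).symm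
        _ ≤ _ := Real.exp_le_exp.mpr ht2
    have hpos : 0 < Real.exp (t ^ 2) - 1 := by linarith
    have hE : 0 < Real.exp (t ^ 2) := Real.exp_pos _
    have h1 : 1 / (Real.exp (t ^ 2) - 1) ≤ Real.exp (-t ^ 2) * c := by
      rw [Real.exp_neg, div_le_iff₀ hpos]
      have h2 : L ≤ α ^ 2 * (Real.exp (t ^ 2) - 1) := by
        have := (div_le_iff₀ hα2).mp (show L / α ^ 2 ≤ Real.exp (t ^ 2) - 1 by linarith)
        linarith
      rw [hc]
      have : (Real.exp (t ^ 2))⁻¹ * (1 + α ^ 2 / L) * (Real.exp (t ^ 2) - 1)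
          = ((L + α ^ 2) * (Real.exp (t ^ 2) - 1)) / (L * Real.exp (t ^ 2)) := by
        field_simp
      rw [this, le_div_iff₀ (by positivity)]
      nlinarith
    calc 1 / Real.sqrt (Real.exp (t ^ 2) - 1)
        = Real.sqrt (1 / (Real.exp (t ^ 2) - 1)) := by
          rw [one_div, one_div, Real.sqrt_inv]
      _ ≤ Real.sqrt (Real.exp (-t ^ 2) * c) := Real.sqrt_le_sqrt h1
      _ = Real.exp (-t ^ 2 / 2) * Real.sqrt c := by
          rw [Real.sqrt_mul (Real.exp_pos _).le, ← Real.exp_half]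
  have hg : Integrable (fun t : ℝ => Real.exp (-t ^ 2 / 2)) := by
    have := integrable_exp_neg_mul_sq (b := (1 : ℝ) / 2) one_half_pos
    convert this using 2 with t
    ring_nf
  have hgOn : IntegrableOn (fun t : ℝ => Real.exp (-t ^ 2 / 2)) (Set.Ioi s) :=
    hg.integrableOn
  have hgcOn : IntegrableOn (fun t : ℝ => Real.exp (-t ^ 2 / 2) * Real.sqrt c)
      (Set.Ioi s) := hgOn.mul_const _
  have hfOn : IntegrableOn (fun t : ℝ => 1 / Real.sqrt (Real.exp (t ^ 2) - 1))
      (Set.Ioi s) := by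
    apply Integrable.mono' hgcOn
    · have hcont : Continuous fun t : ℝ => Real.sqrt (Real.exp (t ^ 2) - 1) := by
        continuity
      exact (measurable_const.div hcont.measurable).aestronglyMeasurable
    · filter_upwards [ae_restrict_mem measurableSet_Ioi] with t ht
      rw [Real.norm_eq_abs, abs_of_nonneg (by positivity)]
      exact key t (le_of_lt ht)
  refine ⟨key, ?_, ?_⟩
  · calc (∫ t in Set.Ioi s, 1 / Real.sqrt (Real.exp (t ^ 2) - 1))
        ≤ ∫ t in Set.Ioi s, Real.exp (-t ^ 2 / 2) * Real.sqrt c :=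
          setIntegral_mono_on hfOn hgcOn measurableSet_Ioi
            (fun t ht => key t (le_of_lt ht))
      _ = Real.sqrt c * ∫ t in Set.Ioi s, Real.exp (-t ^ 2 / 2) := by
          rw [integral_mul_const]; ring
  · have htot : (∫ t : ℝ, Real.exp (-t ^ 2 / 2)) = Real.sqrt (2 * Real.pi) := by
      have := integral_gaussian ((1 : ℝ) / 2)
      rw [show Real.pi / (1 / 2) = 2 * Real.pi by ring] at this
      rw [← this]
      congr 1 with t
      ring_nf
    have hsplit : (∫ t in Set.Iic s, Real.exp (-t ^ 2 / 2)) +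
        (∫ t in Set.Ioi s, Real.exp (-t ^ 2 / 2)) = Real.sqrt (2 * Real.pi) := by
      rw [← htot]
      exact intervalIntegral.integral_Iic_add_Ioi hg.integrableOn hg.integrableOn
    have h2π : (0 : ℝ) < Real.sqrt (2 * Real.pi) := Real.sqrt_pos.mpr (by positivity)
    have hcdf : stdNormalCDF s =
        (∫ t in Set.Iic s, Real.exp (-t ^ 2 / 2)) / Real.sqrt (2 * Real.pi) := by
      rw [stdNormalCDF, integral_div]
    have hmul : Real.sqrt (2 * Real.pi * c) =
        Real.sqrt (2 * Real.pi) * Real.sqrt c :=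
      Real.sqrt_mul (by positivity) _
    rw [hcdf, hmul]
    have hIoi : (∫ t in Set.Ioi s, Real.exp (-t ^ 2 / 2)) =
        Real.sqrt (2 * Real.pi) - ∫ t in Set.Iic s, Real.exp (-t ^ 2 / 2) := by
      linarith
    rw [hIoi]
    field_simp
end

section
/- For all α ∈ (0, √(L/(e-1))] and L > 0, ∫₀^α √(log(L/ε² + 1)) dε ≤ α √(log(L/α² + 1)) + √(2π(L + α²)) (1 - Φ(√(log(L/α² + 1)))). -/
open MeasureTheory Real

lemma aux_sqrt_log_deriv (L x : ℝ) (hL : 0 < L) (hx : 0 < x) :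
    HasDerivAt (fun ε : ℝ => Real.sqrt (Real.log (L / ε ^ 2 + 1)))
      (-L / (x * (L + x ^ 2) * Real.sqrt (Real.log (L / x ^ 2 + 1)))) x := by
  have hx2 : (x:ℝ) ^ 2 ≠ 0 := by positivity
  have hu : 0 < L / x ^ 2 + 1 := by positivity
  have hu1 : 1 < L / x ^ 2 + 1 := by
    have : 0 < L / x ^ 2 := by positivity
    linarith
  have hlog : 0 < Real.log (L / x ^ 2 + 1) := Real.log_pos hu1
  have h1 : HasDerivAt (fun ε : ℝ => L / ε ^ 2 + 1)
      ((0 * x ^ 2 - L * (2 * x ^ 1)) / (x ^ 2) ^ 2) x :=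
    ((hasDerivAt_const x L).div (hasDerivAt_pow 2 x) hx2).add_const 1
  have h2 := (h1.log (ne_of_gt hu)).sqrt (ne_of_gt hlog)
  convert h2 using 1
  have hs : Real.sqrt (Real.log (L / x ^ 2 + 1)) ≠ 0 := by positivity
  have hx0 : x ≠ 0 := ne_of_gt hx
  have hLx : L + x ^ 2 ≠ 0 := by positivity
  generalize Real.sqrt (Real.log (L / x ^ 2 + 1)) = s at hs ⊢
  rw [div_add' _ _ _ (pow_ne_zero 2 hx0)]
  field_simp
  ring

lemma aux_gauss_val (L x : ℝ) (hL : 0 < L) (hx : 0 < x) :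
    Real.exp (-Real.sqrt (Real.log (L / x ^ 2 + 1)) ^ 2 / 2) = x / Real.sqrt (L + x ^ 2) := by
  have hu : 0 < L / x ^ 2 + 1 := by positivity
  have hu1 : 1 < L / x ^ 2 + 1 := by
    have : 0 < L / x ^ 2 := by positivity
    linarith
  have hlog : 0 < Real.log (L / x ^ 2 + 1) := Real.log_pos hu1
  have hsq : Real.sqrt (Real.log (L / x ^ 2 + 1)) ^ 2 = Real.log (L / x ^ 2 + 1) :=
    Real.sq_sqrt hlog.le
  rw [hsq]
  have h1 : Real.sqrt (L / x ^ 2 + 1) = Real.exp (Real.log (L / x ^ 2 + 1) * (1/2)) := by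
    rw [Real.sqrt_eq_rpow, Real.rpow_def_of_pos hu]
  have h2 : Real.sqrt (L / x ^ 2 + 1) = Real.sqrt (L + x ^ 2) / x := by
    rw [show L / x ^ 2 + 1 = (L + x ^ 2) / x ^ 2 by field_simp]
    rw [Real.sqrt_div (by positivity) _, Real.sqrt_sq hx.le]
  rw [show -Real.log (L / x ^ 2 + 1) / 2 = -(Real.log (L / x ^ 2 + 1) * (1/2)) by ring,
    Real.exp_neg, ← h1, h2, inv_div]

set_option maxHeartbeats 1000000 in
/-- Dudley entropy integral bound: for `L > 0` and `0 < α ≤ √(L/(e-1))`,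
`∫₀^α √(log(L/ε² + 1)) dε ≤ α √(log(L/α² + 1))
  + √(2π(L + α²)) (1 - Φ(√(log(L/α² + 1))))`. -/
theorem stmt_18 (L α : ℝ) (hL : 0 < L) (hα : 0 < α)
    (hαL : α ≤ Real.sqrt (L / (Real.exp 1 - 1))) :
    ∫ ε in (0 : ℝ)..α, Real.sqrt (Real.log (L / ε ^ 2 + 1)) ≤
      α * Real.sqrt (Real.log (L / α ^ 2 + 1)) +
        Real.sqrt (2 * Real.pi * (L + α ^ 2)) *
          (1 - stdNormalCDF (Real.sqrt (Real.log (L / α ^ 2 + 1)))) := by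
  clear hαL
  set g : ℝ → ℝ := fun u => Real.exp (-u ^ 2 / 2) with hg_def
  set f : ℝ → ℝ := fun ε => Real.sqrt (Real.log (L / ε ^ 2 + 1)) with hf_def
  set C : ℝ := Real.sqrt (L + α ^ 2) with hC_def
  set G : ℝ → ℝ := fun t => ∫ u in (0:ℝ)..t, g u with hG_def
  set Fd : ℝ → ℝ := fun x => -L / (x * (L + x ^ 2) * f x) with hFd_def
  set H : ℝ → ℝ := fun x => x * f x - C * G (f x) with hH_def
  set H' : ℝ → ℝ := fun x => f x + x * Fd x - C * (g (f x) * Fd x) with hH'_def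
  have hgc : Continuous g := by
    have : Continuous fun u : ℝ => -u ^ 2 / 2 := by continuity
    exact Real.continuous_exp.comp this
  have hgnn : ∀ u, 0 ≤ g u := fun u => (Real.exp_pos _).le
  have hexpeq : g = fun u : ℝ => Real.exp (-(1/2) * u ^ 2) := by
    rw [hg_def]
    funext u
    congr 1
    ring
  have hgi : Integrable g := by
    rw [hexpeq]
    exact integrable_exp_neg_mul_sq (by norm_num)
  have htotal : ∫ u, g u = Real.sqrt (2 * Real.pi) := by
    have h := integral_gaussian (1/2 : ℝ)
    rw [show (Real.pi / (1/2 : ℝ)) = 2 * Real.pi by ring] at h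
    rw [hexpeq, h]
  have hfm : Measurable f :=
    (Real.continuous_sqrt.measurable).comp
      ((Real.measurable_log).comp
        ((measurable_const.div ((measurable_id.pow_const 2))).add_const 1))
  have hu1 : ∀ x : ℝ, 0 < x → 1 < L / x ^ 2 + 1 := by
    intro x hx
    have : 0 < L / x ^ 2 := by positivity
    linarith
  have hlogpos : ∀ x : ℝ, 0 < x → 0 < Real.log (L / x ^ 2 + 1) :=
    fun x hx => Real.log_pos (hu1 x hx)
  have hfpos : ∀ x : ℝ, 0 < x → 0 < f x := by
    intro x hx
    exact Real.sqrt_pos.2 (hlogpos x hx)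
  have hfnn : ∀ x : ℝ, 0 ≤ f x := fun x => Real.sqrt_nonneg _
  have hfderiv : ∀ x : ℝ, 0 < x → HasDerivAt f (Fd x) x := by
    intro x hx
    have := aux_sqrt_log_deriv L x hL hx
    rw [hf_def, hFd_def]
    convert this using 2
  have hFdnonpos : ∀ x : ℝ, 0 < x → Fd x ≤ 0 := by
    intro x hx
    rw [hFd_def]
    have h1 : 0 < x * (L + x ^ 2) * f x := by
      have := hfpos x hx
      positivity
    exact div_nonpos_of_nonpos_of_nonneg (by linarith) h1.le
  have hGderiv : ∀ t : ℝ, HasDerivAt G (g t) t := by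
    intro t
    exact intervalIntegral.integral_hasDerivAt_right
      (hgc.intervalIntegrable _ _)
      (hgc.stronglyMeasurable.stronglyMeasurableAtFilter)
      (hgc.continuousAt)
  have hHderiv : ∀ x : ℝ, 0 < x → HasDerivAt H (H' x) x := by
    intro x hx
    have h1 : HasDerivAt (fun y => y * f y) (1 * f x + x * Fd x) x :=
      (hasDerivAt_id x).mul (hfderiv x hx)
    have h2 : HasDerivAt (fun y => G (f y)) (g (f x) * Fd x) x :=
      (hGderiv (f x)).comp x (hfderiv x hx)
    have h3 := h1.sub (h2.const_mul C)
    refine h3.congr_deriv ?_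
    rw [hH'_def]
    ring
  have hkey : ∀ x : ℝ, 0 < x → x ≤ α → f x ≤ H' x := by
    intro x hx hxα
    have hexp : g (f x) = x / Real.sqrt (L + x ^ 2) := aux_gauss_val L x hL hx
    have hxle : x ≤ C * g (f x) := by
      rw [hexp, hC_def]
      have h3 : 0 < Real.sqrt (L + x ^ 2) := by positivity
      have h2 : Real.sqrt (L + x ^ 2) ≤ Real.sqrt (L + α ^ 2) := by
        apply Real.sqrt_le_sqrt
        nlinarith
      rw [mul_div_assoc', le_div_iff₀ h3]
      nlinarith [Real.sqrt_nonneg (L + α ^ 2)]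
    have h1 : 0 ≤ Fd x * (x - C * g (f x)) := by
      nlinarith [mul_nonneg (neg_nonneg.2 (hFdnonpos x hx)) (sub_nonneg.2 hxle)]
    have : f x ≤ f x + x * Fd x - C * (g (f x) * Fd x) := by nlinarith [h1]
    exact this
  -- integrability of f on [0, α]
  have h_int : IntervalIntegrable f volume 0 α := by
    set c : ℝ := Real.sqrt (2 * Real.sqrt (L + α ^ 2)) with hc_def
    have hg0 : IntervalIntegrable (fun x : ℝ => c * x ^ (-(1/2) : ℝ)) volume 0 α :=
      (intervalIntegral.intervalIntegrable_rpow' (by norm_num)).const_mul c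
    apply hg0.mono_fun (hfm.aestronglyMeasurable.restrict)
    filter_upwards [ae_restrict_mem measurableSet_uIoc] with x hx
    rw [Set.uIoc_of_le hα.le] at hx
    obtain ⟨hx0, hxα⟩ := hx
    have hu : 0 < L / x ^ 2 + 1 := by positivity
    have hrpow : x ^ (-(1/2) : ℝ) = Real.sqrt (1 / x) := by
      rw [show (1:ℝ)/x = x⁻¹ from one_div x, Real.sqrt_inv, Real.sqrt_eq_rpow,
        ← Real.rpow_neg hx0.le]
    have hfle : f x ≤ c * x ^ (-(1/2) : ℝ) := by
      have hsu : 0 < Real.sqrt (L / x ^ 2 + 1) := Real.sqrt_pos.2 hu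
      have hlog2 : Real.log (L / x ^ 2 + 1) ≤ 2 * Real.sqrt (L / x ^ 2 + 1) := by
        have h5 := Real.log_le_sub_one_of_pos hsu
        have h6 : Real.log (Real.sqrt (L / x ^ 2 + 1)) = Real.log (L / x ^ 2 + 1) / 2 :=
          Real.log_sqrt hu.le
        linarith
      have hule : L / x ^ 2 + 1 ≤ (L + α ^ 2) / x ^ 2 := by
        rw [div_add' _ _ _ (by positivity : (x:ℝ) ^ 2 ≠ 0)]
        have : x ^ 2 ≤ α ^ 2 := by nlinarith
        apply div_le_div_of_nonneg_right ?_ (by positivity)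
        · linarith
      have hs2 : Real.sqrt (L / x ^ 2 + 1) ≤ Real.sqrt (L + α ^ 2) / x := by
        calc Real.sqrt (L / x ^ 2 + 1) ≤ Real.sqrt ((L + α ^ 2) / x ^ 2) :=
              Real.sqrt_le_sqrt hule
          _ = Real.sqrt (L + α ^ 2) / x := by
              rw [Real.sqrt_div (by positivity) _, Real.sqrt_sq hx0.le]
      calc f x ≤ Real.sqrt (2 * (Real.sqrt (L + α ^ 2) / x)) := by
            apply Real.sqrt_le_sqrt
            linarith
        _ = c * x ^ (-(1/2) : ℝ) := by
            rw [hrpow, hc_def, show 2 * (Real.sqrt (L + α ^ 2) / x)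
              = (2 * Real.sqrt (L + α ^ 2)) * (1 / x) by ring,
              Real.sqrt_mul (by positivity)]
    rw [Real.norm_eq_abs, Real.norm_eq_abs, abs_of_nonneg (hfnn x),
      abs_of_nonneg (by positivity : (0:ℝ) ≤ c * x ^ (-(1/2) : ℝ))]
    exact hfle
  -- per-δ bound
  have hGle : ∀ t : ℝ, 0 ≤ t → G t ≤ ∫ u in Set.Ioi (0:ℝ), g u := by
    intro t ht
    rw [hG_def]
    simp only
    rw [intervalIntegral.integral_of_le ht]
    exact setIntegral_mono_set hgi.integrableOn
      (Filter.Eventually.of_forall hgnn)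
      (Filter.Eventually.of_forall (fun u hu => Set.Ioc_subset_Ioi_self hu))
  have hGsplit : (∫ u in Set.Ioi (0:ℝ), g u) = G (f α) + ∫ u in Set.Ioi (f α), g u := by
    rw [← Set.Ioc_union_Ioi_eq_Ioi (hfnn α),
      setIntegral_union Set.Ioc_disjoint_Ioi_same measurableSet_Ioi
        hgi.integrableOn hgi.integrableOn]
    congr 1
    rw [hG_def]
    simp only
    rw [intervalIntegral.integral_of_le (hfnn α)]
  have hperδ : ∀ δ : ℝ, 0 < δ → δ ≤ α →
      (∫ ε in δ..α, f ε) ≤ α * f α + C * ∫ u in Set.Ioi (f α), g u := by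
    intro δ hδ hδα
    have hpos : ∀ x ∈ Set.Icc δ α, 0 < x := fun x hx => lt_of_lt_of_le hδ hx.1
    have hContf : ContinuousOn f (Set.Icc δ α) := fun x hx =>
      ((hfderiv x (hpos x hx)).continuousAt).continuousWithinAt
    have hContFd : ContinuousOn Fd (Set.Icc δ α) := by
      apply ContinuousOn.div continuousOn_const
      · exact (continuousOn_id.mul (continuousOn_const.add (continuousOn_id.pow 2))).mul hContf
      · intro x hx
        have h1 := hpos x hx
        have h2 := hfpos x (hpos x hx)
        positivity
    have hContH' : ContinuousOn H' (Set.Icc δ α) :=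
      (hContf.add (continuousOn_id.mul hContFd)).sub
        (continuousOn_const.mul ((hgc.comp_continuousOn hContf).mul hContFd))
    have huIcc : Set.uIcc δ α = Set.Icc δ α := Set.uIcc_of_le hδα
    have hH'int : IntervalIntegrable H' volume δ α := by
      apply ContinuousOn.intervalIntegrable
      rw [huIcc]
      exact hContH'
    have hfint : IntervalIntegrable f volume δ α := by
      apply ContinuousOn.intervalIntegrable
      rw [huIcc]
      exact hContf
    have h1 : ∫ x in δ..α, H' x = H α - H δ := by
      apply intervalIntegral.integral_eq_sub_of_hasDerivAt _ hH'int
      intro x hx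
      rw [huIcc] at hx
      exact hHderiv x (hpos x hx)
    have h2 : (∫ x in δ..α, f x) ≤ ∫ x in δ..α, H' x := by
      apply intervalIntegral.integral_mono_on hδα hfint hH'int
      intro x hx
      exact hkey x (hpos x hx) hx.2
    have h3 : G (f δ) ≤ G (f α) + ∫ u in Set.Ioi (f α), g u := by
      rw [← hGsplit]
      exact hGle (f δ) (hfnn δ)
    have hCnn : 0 ≤ C := Real.sqrt_nonneg _
    have h4 : C * G (f δ) ≤ C * (G (f α) + ∫ u in Set.Ioi (f α), g u) :=
      mul_le_mul_of_nonneg_left h3 hCnn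
    have h5 : 0 ≤ δ * f δ := mul_nonneg hδ.le (hfnn δ)
    have h6 : H α - H δ = α * f α - C * G (f α) - δ * f δ + C * G (f δ) := by
      rw [hH_def]; ring
    calc (∫ x in δ..α, f x) ≤ H α - H δ := h2.trans (le_of_eq h1)
      _ = α * f α - C * G (f α) - δ * f δ + C * G (f δ) := h6
      _ ≤ α * f α + C * ∫ u in Set.Ioi (f α), g u := by nlinarith [h4, h5]
  -- limit δ → 0
  have hmain : (∫ ε in (0:ℝ)..α, f ε) ≤ α * f α + C * ∫ u in Set.Ioi (f α), g u := by
    set B := α * f α + C * ∫ u in Set.Ioi (f α), g u with hB_def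
    set φ : ℝ → ℝ := fun x => ∫ t in Set.Ioc 0 x, f t with hφ_def
    have hIccInt : IntegrableOn f (Set.Icc 0 α) := by
      rw [integrableOn_Icc_iff_integrableOn_Ioc]
      exact (intervalIntegrable_iff_integrableOn_Ioc_of_le hα.le).1 h_int
    have hφcont : ContinuousOn φ (Set.Icc 0 α) :=
      intervalIntegral.continuousOn_primitive hIccInt
    have hδn : ∀ n : ℕ, α / (n + 1) ∈ Set.Ioc (0:ℝ) α := by
      intro n
      constructor
      · positivity
      · apply div_le_self hα.le
        have hn : (0:ℝ) ≤ (n:ℝ) := Nat.cast_nonneg n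
        linarith
    have hseq : Filter.Tendsto (fun n : ℕ => α / (n + 1)) Filter.atTop (nhds 0) := by
      have h2 := (tendsto_const_div_atTop_nhds_zero_nat α).comp (Filter.tendsto_add_atTop_nat 1)
      have heq : ((fun n : ℕ => α / (n:ℝ)) ∘ fun a => a + 1) = fun n : ℕ => α / ((n:ℝ) + 1) := by
        funext n
        simp only [Function.comp_apply]
        push_cast
        ring
      rwa [heq] at h2
    have htendin : Filter.Tendsto (fun n : ℕ => α / (n + 1)) Filter.atTop
        (nhdsWithin 0 (Set.Icc 0 α)) := by
      rw [tendsto_nhdsWithin_iff]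
      refine ⟨hseq, Filter.Eventually.of_forall fun n => ?_⟩
      exact ⟨(hδn n).1.le, (hδn n).2⟩
    have hφ0 : φ 0 = 0 := by
      rw [hφ_def]
      simp
    have hφtend : Filter.Tendsto (fun n : ℕ => φ (α / (n + 1))) Filter.atTop (nhds 0) := by
      rw [← hφ0]
      exact ((hφcont 0 ⟨le_rfl, hα.le⟩).tendsto).comp htendin
    have hsplit : ∀ n : ℕ, (∫ ε in (0:ℝ)..α, f ε) - φ (α / (n + 1)) =
        ∫ ε in (α / (n + 1))..α, f ε := by
      intro n
      have hmem := hδn n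
      have ha : IntervalIntegrable f volume 0 (α / (n + 1)) := by
        apply h_int.mono_set
        rw [Set.uIcc_of_le hmem.1.le, Set.uIcc_of_le hα.le]
        exact Set.Icc_subset_Icc le_rfl hmem.2
      have hb : IntervalIntegrable f volume (α / (n + 1)) α := by
        apply h_int.mono_set
        rw [Set.uIcc_of_le hmem.2, Set.uIcc_of_le hα.le]
        exact Set.Icc_subset_Icc hmem.1.le le_rfl
      have hadd := intervalIntegral.integral_add_adjacent_intervals ha hb
      have hφeq : φ (α / (n + 1)) = ∫ ε in (0:ℝ)..(α / (n + 1)), f ε := by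
        rw [hφ_def]
        simp only
        rw [intervalIntegral.integral_of_le hmem.1.le]
      rw [hφeq, ← hadd]
      ring
    have hle : ∀ n : ℕ, (∫ ε in (0:ℝ)..α, f ε) - φ (α / (n + 1)) ≤ B := by
      intro n
      rw [hsplit n]
      exact hperδ _ (hδn n).1 (hδn n).2
    have htend2 : Filter.Tendsto (fun n : ℕ => (∫ ε in (0:ℝ)..α, f ε) - φ (α / (n + 1)))
        Filter.atTop (nhds ((∫ ε in (0:ℝ)..α, f ε) - 0)) :=
      Filter.Tendsto.sub tendsto_const_nhds hφtend
    have := le_of_tendsto htend2 (Filter.Eventually.of_forall hle)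
    linarith
  -- rewrite the RHS
  have hπpos : (0:ℝ) < Real.sqrt (2 * Real.pi) := Real.sqrt_pos.2 (by positivity)
  have hIic : stdNormalCDF (f α) = (∫ u in Set.Iic (f α), g u) / Real.sqrt (2 * Real.pi) := by
    rw [stdNormalCDF, ← integral_div]
  have hcompl : (∫ u in Set.Iic (f α), g u) + (∫ u in Set.Ioi (f α), g u)
      = Real.sqrt (2 * Real.pi) := by
    rw [← htotal, ← integral_add_compl measurableSet_Iic hgi, Set.compl_Iic]
  have hsplitC : Real.sqrt (2 * Real.pi * (L + α ^ 2)) = Real.sqrt (2 * Real.pi) * C := by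
    rw [hC_def, ← Real.sqrt_mul (by positivity)]
  have hRHS : α * f α + C * ∫ u in Set.Ioi (f α), g u =
      α * f α + Real.sqrt (2 * Real.pi * (L + α ^ 2)) * (1 - stdNormalCDF (f α)) := by
    rw [hsplitC, hIic]
    have : (∫ u in Set.Ioi (f α), g u) = Real.sqrt (2 * Real.pi) - ∫ u in Set.Iic (f α), g u := by
      linarith
    rw [this]
    field_simp
  rw [hRHS] at hmain
  exact hmain
end
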